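/- For every ℓ ∈ ℕ₀ it holds that N_n(ℓ, 𝟐, 𝟐) = MAX_n(2^ℓ), where 𝟐 denotes the indegree vector (n,2,…,2) and rank vector (2,…,2) of length ℓ. That is, the functions computable by indegree-2-constrained rank-2 maxout networks with ℓ hidden layers (first layer fully connected) are exactly the finite real linear combinations of maxima of at most 2^ℓ linear functions. -/

import Mathlib

open Pointwise

noncomputable section SparseMaxout

/-- Vectors in `ℝ^n`. -/
abbrev Vec (n : ℕ) := Fin n → ℝ

/-- A polytope is the convex hull of a finite nonempty set of points. -/
def IsPolytope {n : ℕ} (P : Set (Vec n)) : Prop :=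
  ∃ s : Finset (Vec n), s.Nonempty ∧ P = convexHull ℝ (s : Set (Vec n))

/-- A simplex is the convex hull of a finite nonempty affinely independent set of points. -/
def IsSimplex {n : ℕ} (S : Set (Vec n)) : Prop :=
  ∃ (k : ℕ) (pts : Fin k → Vec n), 0 < k ∧ AffineIndependent ℝ pts ∧
    S = convexHull ℝ (Set.range pts)

/-- The support function `f_P(x) = max_{a ∈ P} ⟨a, x⟩` of a set `P`. -/
def suppFn {n : ℕ} (P : Set (Vec n)) (x : Vec n) : ℝ :=
  sSup ((fun a => ∑ i, a i * x i) '' P)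

/-- The dimension of a polytope: the dimension of its affine hull. -/
def polyDim {n : ℕ} (P : Set (Vec n)) : ℕ :=
  Module.finrank ℝ (affineSpan ℝ P).direction

/-- A (representative of a) virtual polytope: a pair `(P, Q)` standing for `P - Q`. -/
abbrev VP (n : ℕ) := Set (Vec n) × Set (Vec n)

/-- Two pairs represent the same virtual polytope: `P₁ - Q₁ = P₂ - Q₂` iff
`P₁ + Q₂ = P₂ + Q₁` (Minkowski sums). -/
def vEquiv {n : ℕ} (A B : VP n) : Prop :=
  A.1 + B.2 = B.1 + A.2

/-- Both components are polytopes. -/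
def IsPolyPair {n : ℕ} (A : VP n) : Prop :=
  IsPolytope A.1 ∧ IsPolytope A.2

/-- Scalar multiple of a virtual polytope: `λ(P - Q) := λP - λQ`. -/
def vSMul {n : ℕ} (c : ℝ) (A : VP n) : VP n := (c • A.1, c • A.2)

/-- Convex hull of finitely many virtual polytopes:
`conv(P₁-Q₁, …, P_m-Q_m) := conv(⋃ᵢ (Pᵢ + Σ_{k≠i} Q_k)) - Σ_k Q_k`. -/
def vConv {n m : ℕ} (V : Fin m → VP n) : VP n :=
  (convexHull ℝ (⋃ i, ((V i).1 + ∑ k ∈ Finset.univ.erase i, (V k).2)),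
   ∑ k, (V k).2)

/-- The dimension of a virtual polytope: `min{dim(A + B) : V = A - B}` over
polytope representations. -/
def vDim {n : ℕ} (V : VP n) : ℕ :=
  sInf {m | ∃ A B : Set (Vec n), IsPolytope A ∧ IsPolytope B ∧
    vEquiv (A, B) V ∧ polyDim (A + B) = m}

/-- Support function of a virtual polytope: `f_{P-Q} := f_P - f_Q`. -/
def vSuppFn {n : ℕ} (V : VP n) (x : Vec n) : ℝ :=
  suppFn V.1 x - suppFn V.2 x

/-- The recursively defined classes `Q̂_ℓ` of virtual polytopes dual to sparse maxout
networks with indegree constraints `d` and ranks `r` (layer `k` uses `d k`, `r k`);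
membership is up to equality of virtual polytopes. -/
def Qhat (n : ℕ) (d r : ℕ → ℕ) : ℕ → Set (VP n)
  | 0 => {V | IsPolyPair V ∧ ∃ v : Vec n, vEquiv V ({v}, {0})}
  | (k+1) => {V | IsPolyPair V ∧
      ∃ (α : Fin (r (k+1)) → Fin (d (k+1)) → ℝ) (W : Fin (d (k+1)) → VP n),
        (∀ j, W j ∈ Qhat n d r k) ∧
        vEquiv V (vConv (fun i => ∑ j, vSMul (α i j) (W j)))}

/-- `Q_n(ℓ,d,r)`: finite real linear combinations of elements of `Q̂_ℓ`. -/
def Qfull (n : ℕ) (d r : ℕ → ℕ) (ℓ : ℕ) : Set (VP n) :=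
  {V | IsPolyPair V ∧ ∃ (p : ℕ) (c : Fin p → ℝ) (W : Fin p → VP n),
    (∀ i, W i ∈ Qhat n d r ℓ) ∧ vEquiv V (∑ i, vSMul (c i) (W i))}

/-- `m_ℓ = Σ_{k=1}^ℓ (r_k - 1) ∏_{i=k+1}^ℓ d_i`. -/
def mval (d r : ℕ → ℕ) (ℓ : ℕ) : ℕ :=
  ∑ k ∈ Finset.Icc 1 ℓ, (r k - 1) * ∏ i ∈ Finset.Icc (k+1) ℓ, d i

/-- The recursively defined classes `N̂_ℓ` of functions computed by a single output
neuron of an indegree-`d`-constrained rank-`r` maxout network with `ℓ` hidden layers. -/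
def Nhat (n : ℕ) (d r : ℕ → ℕ) : ℕ → Set ((Vec n) → ℝ)
  | 0 => {f | ∃ v : Vec n, f = fun x => ∑ i, v i * x i}
  | (k+1) => {f | ∃ (α : Fin (r (k+1)) → Fin (d (k+1)) → ℝ)
      (g : Fin (d (k+1)) → (Vec n) → ℝ),
      (∀ j, g j ∈ Nhat n d r k) ∧
      f = fun x => ⨆ i, ∑ j, α i j * g j x}

/-- `N_n(ℓ,d,r)`: finite real linear combinations of functions in `N̂_ℓ`. -/
def Nfull (n : ℕ) (d r : ℕ → ℕ) (ℓ : ℕ) : Set ((Vec n) → ℝ) :=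
  {f | ∃ (p : ℕ) (c : Fin p → ℝ) (g : Fin p → (Vec n) → ℝ),
    (∀ i, g i ∈ Nhat n d r ℓ) ∧ f = fun x => ∑ i, c i * g i x}

/-- Unconstrained single-neuron classes `N̂_ℓ` (no indegree constraint). -/
def NhatU (n : ℕ) (r : ℕ → ℕ) : ℕ → Set ((Vec n) → ℝ)
  | 0 => {f | ∃ v : Vec n, f = fun x => ∑ i, v i * x i}
  | (k+1) => {f | ∃ (m : ℕ) (α : Fin (r (k+1)) → Fin m → ℝ)
      (g : Fin m → (Vec n) → ℝ),
      (∀ j, g j ∈ NhatU n r k) ∧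
      f = fun x => ⨆ i, ∑ j, α i j * g j x}

/-- `N_n(ℓ,r)`: finite real linear combinations of functions in the unconstrained `N̂_ℓ`. -/
def NfullU (n : ℕ) (r : ℕ → ℕ) (ℓ : ℕ) : Set ((Vec n) → ℝ) :=
  {f | ∃ (p : ℕ) (c : Fin p → ℝ) (g : Fin p → (Vec n) → ℝ),
    (∀ i, g i ∈ NhatU n r ℓ) ∧ f = fun x => ∑ i, c i * g i x}

/-- `MAX_n(m)`: finite real linear combinations of maxima of at most `m` linear functions. -/
def MAXn (n m : ℕ) : Set ((Vec n) → ℝ) :=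
  {f | ∃ (p : ℕ) (β : Fin p → ℝ) (a : Fin p → Fin m → Vec n),
    f = fun x => ∑ i, β i * ⨆ j, ∑ t, a i j t * x t}

/-!
Upper bound. By induction on the layers, every `f ∈ N̂_ℓ` is `f_A - f_B` for finite sets `A`, `B`,
each in a translate of one subspace of dimension at most `m_ℓ` (`= 2^ℓ - 1` for `𝟐`): linear
combinations go to Minkowski sums, and `max (f_A - f_B) (f_C - f_D) = f_{(A+D) ∪ (C+B)} - f_{B+D}`
costs one more direction. A support function `f_A` of a set spanning an affine space of dimension
`D` lies in the span of maxima of `D + 1` linear functions: otherwise `A` has a Radon partition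
`J ⊔ S` with `q ∈ conv J ∩ conv S`; at each `x` some `j ∈ J` has `⟨j,x⟩ ≤ ⟨q,x⟩ ≤ f_S(x)`, so in
`∑_{T ⊆ J} (-1)^|T| f_{S ∪ T}` the terms of `T` and `T ∪ {j}` cancel, and `f_A = f_{S ∪ J}` is a
combination of support functions of proper subsets of `A`.

Lower bound. A maximum of `2^ℓ` linear functions is a balanced binary tree of pairwise maxima.
-/

open Finset Module

lemma Finset.sum_powerset_neg_one_pow_card_mul_eq_zero {α R : Type*} [DecidableEq α] [CommRing R]
    {J : Finset α} {j : α} (hj : j ∈ J) (φ : Finset α → R)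
    (hφ : ∀ T ⊆ J.erase j, φ (insert j T) = φ T) :
    ∑ T ∈ J.powerset, (-1 : R) ^ T.card * φ T = 0 := by
  rw [← insert_erase hj, sum_powerset_insert (notMem_erase j J), ← sum_add_distrib]
  refine sum_eq_zero fun T hT => ?_
  have hT := mem_powerset.mp hT
  rw [hφ T hT, card_insert_of_notMem fun h => notMem_erase j J (hT h), pow_succ]
  ring

lemma Finset.exists_union_eq_of_card_le_two_mul {α : Type*} [DecidableEq α] {A : Finset α}
    (hA : A.Nonempty) {m : ℕ} (hcard : A.card ≤ 2 * m) :
    ∃ B C : Finset α, B.Nonempty ∧ C.Nonempty ∧ B.card ≤ m ∧ C.card ≤ m ∧ B ∪ C = A := by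
  by_cases hm : A.card ≤ m
  · exact ⟨A, A, hA, hA, hm, hm, union_self A⟩
  obtain ⟨B, hBA, hB⟩ := exists_subset_card_eq (not_le.mp hm).le
  have hAB : (A \ B).card = A.card - m := by rw [card_sdiff_of_subset hBA, hB]
  refine ⟨B, A \ B, ?_, ?_, hB.le, by omega, union_sdiff_of_subset hBA⟩
  · rw [← card_pos]; omega
  · rw [← card_pos]; omega

lemma Finset.exists_fin_range_eq {α : Type*} {A : Finset α} (hA : A.Nonempty) {m : ℕ}
    (hcard : A.card ≤ m) : ∃ a : Fin m → α, Set.range a = A := by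
  obtain ⟨e⟩ := Function.Embedding.nonempty_of_card_le (α := A) (β := Fin m) (by simpa using hcard)
  have : Nonempty A := hA.to_subtype
  refine ⟨Subtype.val ∘ Function.invFun e, ?_⟩
  rw [Set.range_comp, (Function.invFun_surjective e.injective).range_eq, Set.image_univ,
    Subtype.range_coe]

lemma Finset.exists_radon_partition {E : Type*} [AddCommGroup E] [Module ℝ E]
    [DecidableEq E] {A : Finset E} (h : ¬ AffineIndependent ℝ ((↑) : A → E)) :
    ∃ J ⊆ A, (convexHull ℝ (J : Set E) ∩ convexHull ℝ ↑(A \ J)).Nonempty := by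
  classical
  obtain ⟨I, hI⟩ := Convex.radon_partition h
  refine ⟨A.filter (· ∈ Subtype.val '' I), filter_subset _ _, ?_⟩
  convert hI using 3 <;> ext v <;> aesop

lemma not_affineIndependent_of_card_lt {E : Type*} [AddCommGroup E] [Module ℝ E]
    [FiniteDimensional ℝ E] {U : Submodule ℝ E} {A : Finset E} {c : E}
    (hA : ∀ a ∈ A, a - c ∈ U) (hcard : finrank ℝ U + 1 < A.card) :
    ¬ AffineIndependent ℝ ((↑) : A → E) := by
  intro hai
  have hspan : vectorSpan ℝ (Set.range ((↑) : A → E)) ≤ U := by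
    rw [vectorSpan_def, Submodule.span_le]
    rintro _ ⟨_, ⟨a, rfl⟩, _, ⟨b, rfl⟩, rfl⟩
    simpa using U.sub_mem (hA a a.2) (hA b b.2)
  have := hai.card_le_finrank_succ
  have := Submodule.finrank_mono hspan
  simp only [Fintype.card_coe] at *
  omega

lemma iSup_fin_two_eq_max (a b : ℝ) : ⨆ i, ![a, b] i = max a b := by
  rw [← sSup_range, Matrix.range_cons_cons_empty, csSup_pair]

lemma Submodule.finrank_finset_sup_le {K V ι : Type*} [DivisionRing K] [AddCommGroup V]
    [Module K V] [FiniteDimensional K V] (s : Finset ι) (U : ι → Submodule K V) {b : ℕ}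
    (hU : ∀ i ∈ s, finrank K (U i) ≤ b) : finrank K ↥(s.sup U) ≤ s.card * b := by
  classical
  induction s using Finset.induction_on with
  | empty => simp
  | insert a s ha ih =>
    rw [sup_insert, card_insert_of_notMem ha, add_mul, one_mul, add_comm]
    exact (Submodule.finrank_add_le_finrank_add_finrank _ _).trans
      (add_le_add (hU a (mem_insert_self a s)) (ih fun i hi => hU i (mem_insert_of_mem hi)))

section Translate

variable {R E : Type*} [Ring R] [AddCommGroup E] [Module R E] {U : Submodule R E}
  {A C : Finset E} {c c' : E}

lemma sub_mem_of_mem_add [DecidableEq E] (hA : ∀ a ∈ A, a - c ∈ U) (hC : ∀ a ∈ C, a - c' ∈ U) :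
    ∀ a ∈ A + C, a - (c + c') ∈ U := by
  intro _ h
  obtain ⟨a, ha, a', ha', rfl⟩ := mem_add.mp h
  simpa [add_sub_add_comm] using U.add_mem (hA a ha) (hC a' ha')

lemma sub_mem_of_mem_smul [DecidableEq E] (hA : ∀ a ∈ A, a - c ∈ U) (t : R) :
    ∀ a ∈ t • A, a - t • c ∈ U := by
  intro _ h
  obtain ⟨a, ha, rfl⟩ := mem_smul_finset.mp h
  simpa [smul_sub] using U.smul_mem t (hA a ha)

lemma sub_mem_of_mem_union [DecidableEq E] (hA : ∀ a ∈ A, a - c ∈ U)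
    (hC : ∀ a ∈ C, a - c' ∈ U) : ∀ a ∈ A ∪ C, a - c' ∈ U ⊔ Submodule.span R {c - c'} := by
  intro a h
  rcases mem_union.mp h with ha | ha
  · simpa using Submodule.add_mem_sup (hA a ha) (Submodule.mem_span_singleton_self (c - c'))
  · exact Submodule.mem_sup_left (hC a ha)

end Translate

section SuppFn

variable {n : ℕ}

lemma suppFn_eq_sSup_image (s : Set (Vec n)) (x : Vec n) :
    suppFn s x = sSup ((dotProductBilin ℝ ℝ).flip x '' s) := rfl

lemma suppFn_range {ι : Type*} (a : ι → Vec n) (x : Vec n) :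
    suppFn (Set.range a) x = ⨆ j, a j ⬝ᵥ x := by
  rw [suppFn, ← Set.range_comp]; rfl

lemma suppFn_singleton (a x : Vec n) : suppFn {a} x = a ⬝ᵥ x := by
  simp [suppFn, dotProduct]

lemma le_suppFn {s : Set (Vec n)} (hs : s.Finite) {a : Vec n} (ha : a ∈ s) (x : Vec n) :
    a ⬝ᵥ x ≤ suppFn s x :=
  le_csSup (hs.image _).bddAbove (Set.mem_image_of_mem _ ha)

lemma suppFn_mono {s t : Set (Vec n)} (ht : t.Finite) (hs : s.Nonempty) (hst : s ⊆ t)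
    (x : Vec n) : suppFn s x ≤ suppFn t x :=
  csSup_le_csSup (ht.image _).bddAbove (hs.image _) (Set.image_mono hst)

lemma suppFn_insert {s : Set (Vec n)} (hs : s.Finite) (hne : s.Nonempty) (a x : Vec n) :
    suppFn (insert a s) x = max (a ⬝ᵥ x) (suppFn s x) := by
  rw [suppFn, Set.image_insert_eq, csSup_insert (hs.image _).bddAbove (hne.image _)]; rfl

lemma suppFn_union {s t : Set (Vec n)} (hs : s.Finite) (hs' : s.Nonempty) (ht : t.Finite)
    (ht' : t.Nonempty) (x : Vec n) : suppFn (s ∪ t) x = max (suppFn s x) (suppFn t x) := by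
  rw [suppFn, Set.image_union,
    csSup_union (hs.image _).bddAbove (hs'.image _) (ht.image _).bddAbove (ht'.image _)]; rfl

lemma suppFn_add {s t : Set (Vec n)} (hs : s.Finite) (hs' : s.Nonempty) (ht : t.Finite)
    (ht' : t.Nonempty) (x : Vec n) : suppFn (s + t) x = suppFn s x + suppFn t x := by
  simp only [suppFn_eq_sSup_image, Set.image_add]
  exact csSup_add (hs'.image _) (hs.image _).bddAbove (ht'.image _) (ht.image _).bddAbove

lemma suppFn_smul (s : Set (Vec n)) {c : ℝ} (hc : 0 ≤ c) (x : Vec n) :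
    suppFn (c • s) x = c * suppFn s x := by
  simp only [suppFn_eq_sSup_image, image_smul_set]
  exact Real.sSup_smul_of_nonneg hc _

end SuppFn

section MaxGen

variable {n : ℕ}

lemma dotProduct_le_suppFn_of_mem_convexHull {S : Finset (Vec n)} {q : Vec n}
    (hq : q ∈ convexHull ℝ (S : Set (Vec n))) (x : Vec n) : q ⬝ᵥ x ≤ suppFn ↑S x := by
  obtain ⟨s, hs, hqs⟩ :=
    ((dotProductBilin ℝ ℝ).flip x).convexOn convex_univ |>.exists_ge_of_mem_convexHull
      (Set.subset_univ _) hq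
  exact hqs.trans (le_suppFn S.finite_toSet hs x)

lemma sum_powerset_neg_one_pow_smul_suppFn_union {S J : Finset (Vec n)} (hS : S.Nonempty)
    (hSJ : (convexHull ℝ (J : Set (Vec n)) ∩ convexHull ℝ ↑S).Nonempty) :
    ∑ T ∈ J.powerset, (-1 : ℝ) ^ T.card • suppFn (↑(S ∪ T) : Set (Vec n)) = 0 := by
  obtain ⟨q, hqJ, hqS⟩ := hSJ
  funext x
  simp only [Finset.sum_apply, Pi.smul_apply, smul_eq_mul, Pi.zero_apply]
  obtain ⟨j, hj, hjq⟩ :=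
    ((dotProductBilin ℝ ℝ).flip x).concaveOn convex_univ |>.exists_le_of_mem_convexHull
      (Set.subset_univ _) hqJ
  refine Finset.sum_powerset_neg_one_pow_card_mul_eq_zero hj _ fun T _ => ?_
  have hjS : j ⬝ᵥ x ≤ suppFn ↑(S ∪ T) x :=
    calc j ⬝ᵥ x ≤ q ⬝ᵥ x := hjq
      _ ≤ suppFn ↑S x := dotProduct_le_suppFn_of_mem_convexHull hqS x
      _ ≤ suppFn ↑(S ∪ T) x := suppFn_mono (S ∪ T).finite_toSet (by simpa using hS)
          (by simp) x
  rw [union_insert, coe_insert,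
    suppFn_insert (S ∪ T).finite_toSet (by simpa using hS.mono subset_union_left), max_eq_right hjS]

def maxGen (n m : ℕ) : Set (Vec n → ℝ) :=
  Set.range fun a : Fin m → Vec n => suppFn (Set.range a)

lemma suppFn_mem_maxGen {A : Finset (Vec n)} (hA : A.Nonempty) {m : ℕ} (hcard : A.card ≤ m) :
    suppFn ↑A ∈ maxGen n m := by
  obtain ⟨a, ha⟩ := A.exists_fin_range_eq hA hcard
  exact ⟨a, congrArg suppFn ha⟩

theorem suppFn_mem_span_maxGen {U : Submodule ℝ (Vec n)} {m : ℕ} (hU : finrank ℝ U < m)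
    {c : Vec n} (A : Finset (Vec n)) (hA : A.Nonempty) (hAU : ∀ a ∈ A, a - c ∈ U) :
    suppFn ↑A ∈ Submodule.span ℝ (maxGen n m) := by
  induction A using Finset.strongInduction with | H A ih =>
  by_cases hcard : A.card ≤ m
  · exact Submodule.subset_span (suppFn_mem_maxGen hA hcard)
  obtain ⟨J, hJA, hq⟩ :=
    A.exists_radon_partition (not_affineIndependent_of_card_lt hAU (by omega))
  have hS : (A \ J).Nonempty :=
    coe_nonempty.mp (convexHull_nonempty_iff.mp ⟨_, hq.some_mem.2⟩)
  have hsum := sum_powerset_neg_one_pow_smul_suppFn_union hS hq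
  rw [← add_sum_erase _ _ (mem_powerset_self J), sdiff_union_of_subset hJA,
    add_eq_zero_iff_eq_neg] at hsum
  rw [← Submodule.smul_mem_iff _ (pow_ne_zero J.card (by norm_num) : (-1 : ℝ) ^ J.card ≠ 0), hsum]
  refine Submodule.neg_mem _ (Submodule.sum_mem _ fun T hT => Submodule.smul_mem _ _ ?_)
  have hTJ : T ⊂ J :=
    Finset.ssubset_iff_subset_ne.mpr ⟨mem_powerset.mp (mem_of_mem_erase hT), ne_of_mem_erase hT⟩
  obtain ⟨j, hjJ, hjT⟩ := exists_of_ssubset hTJ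
  have hsub : A \ J ∪ T ⊆ A := union_subset sdiff_subset (hTJ.subset.trans hJA)
  refine ih _ ((ssubset_iff_of_subset hsub).mpr ⟨j, hJA hjJ, by simp [hjJ, hjT]⟩)
    (hS.mono subset_union_left) fun a ha => hAU a (hsub ha)

lemma mem_MAXn_of_mem_span_maxGen {m : ℕ} {f : Vec n → ℝ}
    (hf : f ∈ Submodule.span ℝ (maxGen n m)) : f ∈ MAXn n m := by
  obtain ⟨p, β, g, rfl⟩ := Submodule.mem_span_set'.mp hf
  choose a ha using fun i => (g i).2
  refine ⟨p, β, a, funext fun x => ?_⟩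
  simp only [Finset.sum_apply, Pi.smul_apply, smul_eq_mul, ← ha, suppFn_range]
  rfl

end MaxGen

section SuppFnDiff

variable {n : ℕ}

/-- `f` is the support function of the virtual polytope `A - B`, whose dimension is at most
`finrank U`. -/
def IsSuppFnDiff (U : Submodule ℝ (Vec n)) (f : Vec n → ℝ) : Prop :=
  ∃ (A B : Finset (Vec n)) (c d : Vec n), A.Nonempty ∧ B.Nonempty ∧
    (∀ a ∈ A, a - c ∈ U) ∧ (∀ b ∈ B, b - d ∈ U) ∧ f = suppFn ↑A - suppFn ↑B

namespace IsSuppFnDiff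

variable {U V : Submodule ℝ (Vec n)} {f g : Vec n → ℝ}

lemma mono (hf : IsSuppFnDiff U f) (hUV : U ≤ V) : IsSuppFnDiff V f := by
  obtain ⟨A, B, c, d, hA, hB, hAU, hBU, rfl⟩ := hf
  exact ⟨A, B, c, d, hA, hB, fun a ha => hUV (hAU a ha), fun b hb => hUV (hBU b hb), rfl⟩

lemma dotProduct (v : Vec n) : IsSuppFnDiff ⊥ (v ⬝ᵥ ·) := by
  refine ⟨{v}, {0}, v, 0, singleton_nonempty v, singleton_nonempty 0, by simp, by simp, ?_⟩
  funext x
  simp [suppFn_singleton]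

lemma zero : IsSuppFnDiff U 0 := by
  convert (dotProduct (0 : Vec n)).mono bot_le using 1
  exact funext fun x => (zero_dotProduct x).symm

lemma add (hf : IsSuppFnDiff U f) (hg : IsSuppFnDiff U g) : IsSuppFnDiff U (f + g) := by
  obtain ⟨A, B, c, d, hA, hB, hAU, hBU, rfl⟩ := hf
  obtain ⟨C, D, c', d', hC, hD, hCU, hDU, rfl⟩ := hg
  refine ⟨A + C, B + D, c + c', d + d', hA.add hC, hB.add hD, sub_mem_of_mem_add hAU hCU,
    sub_mem_of_mem_add hBU hDU, funext fun x => ?_⟩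
  simp only [coe_add, Pi.add_apply, Pi.sub_apply]
  rw [suppFn_add (finite_toSet A) (coe_nonempty.mpr hA) (finite_toSet C) (coe_nonempty.mpr hC),
    suppFn_add (finite_toSet B) (coe_nonempty.mpr hB) (finite_toSet D) (coe_nonempty.mpr hD)]
  ring

lemma smul (hf : IsSuppFnDiff U f) (t : ℝ) : IsSuppFnDiff U (t • f) := by
  obtain ⟨A, B, c, d, hA, hB, hAU, hBU, rfl⟩ := hf
  rcases le_total 0 t with ht | ht
  · refine ⟨t • A, t • B, t • c, t • d, hA.smul_finset, hB.smul_finset, sub_mem_of_mem_smul hAU t,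
      sub_mem_of_mem_smul hBU t, funext fun x => ?_⟩
    simp only [coe_smul_finset, Pi.smul_apply, Pi.sub_apply, smul_eq_mul, suppFn_smul _ ht]
    ring
  · refine ⟨(-t) • B, (-t) • A, (-t) • d, (-t) • c, hB.smul_finset, hA.smul_finset,
      sub_mem_of_mem_smul hBU (-t), sub_mem_of_mem_smul hAU (-t), funext fun x => ?_⟩
    simp only [coe_smul_finset, Pi.smul_apply, Pi.sub_apply, smul_eq_mul,
      suppFn_smul _ (neg_nonneg.mpr ht)]
    ring

lemma max (hf : IsSuppFnDiff U f) (hg : IsSuppFnDiff U g) :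
    ∃ v, IsSuppFnDiff (U ⊔ Submodule.span ℝ {v}) (f ⊔ g) := by
  obtain ⟨A, B, c, d, hA, hB, hAU, hBU, rfl⟩ := hf
  obtain ⟨C, D, c', d', hC, hD, hCU, hDU, rfl⟩ := hg
  refine ⟨(c + d') - (c' + d), (A + D) ∪ (C + B), B + D, c' + d, d + d',
    (hA.add hD).mono subset_union_left, hB.add hD,
    sub_mem_of_mem_union (sub_mem_of_mem_add hAU hDU) (sub_mem_of_mem_add hCU hBU),
    fun b hb => Submodule.mem_sup_left (sub_mem_of_mem_add hBU hDU b hb), funext fun x => ?_⟩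
  have hfin : ∀ P : Finset (Vec n), (P : Set (Vec n)).Finite := finite_toSet
  simp only [Pi.sup_apply, Pi.sub_apply]
  rw [coe_union, suppFn_union (hfin _) (coe_nonempty.mpr (hA.add hD)) (hfin _)
    (coe_nonempty.mpr (hC.add hB)), coe_add, coe_add, coe_add,
    suppFn_add (hfin A) (coe_nonempty.mpr hA) (hfin D) (coe_nonempty.mpr hD),
    suppFn_add (hfin C) (coe_nonempty.mpr hC) (hfin B) (coe_nonempty.mpr hB),
    suppFn_add (hfin B) (coe_nonempty.mpr hB) (hfin D) (coe_nonempty.mpr hD), ← max_sub_sub_right]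
  congr 1 <;> ring

lemma sum {ι : Type*} (s : Finset ι) {U : ι → Submodule ℝ (Vec n)} {g : ι → Vec n → ℝ}
    (hg : ∀ i ∈ s, IsSuppFnDiff (U i) (g i)) (t : ι → ℝ) :
    IsSuppFnDiff (s.sup U) (∑ i ∈ s, t i • g i) := by
  classical
  induction s using Finset.induction_on with
  | empty => exact zero
  | insert a s ha ih =>
    rw [sum_insert ha, sup_insert]
    exact (((hg a (mem_insert_self a s)).smul (t a)).mono le_sup_left).add
      ((ih fun i hi => hg i (mem_insert_of_mem hi)).mono le_sup_right)

lemma finset_sup' {ι : Type*} {s : Finset ι} (hs : s.Nonempty) {g : ι → Vec n → ℝ}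
    (hg : ∀ i ∈ s, IsSuppFnDiff U (g i)) :
    ∃ V, U ≤ V ∧ finrank ℝ V ≤ finrank ℝ U + (s.card - 1) ∧ IsSuppFnDiff V (s.sup' hs g) := by
  induction hs using Finset.Nonempty.cons_induction with
  | singleton a => exact ⟨U, le_rfl, by simp, by simpa using hg a (mem_singleton_self a)⟩
  | cons a s ha hs ih =>
    obtain ⟨V, hUV, hV, hgV⟩ := ih fun i hi => hg i (mem_cons_of_mem hi)
    obtain ⟨v, hv⟩ := ((hg a (mem_cons_self a s)).mono hUV).max hgV
    refine ⟨V ⊔ Submodule.span ℝ {v}, hUV.trans le_sup_left, ?_, by rwa [sup'_cons]⟩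
    have := Submodule.finrank_add_le_finrank_add_finrank V (Submodule.span ℝ {v})
    have : finrank ℝ (Submodule.span ℝ {v}) ≤ 1 := by
      simpa using finrank_span_le_card ({v} : Set (Vec n))
    have := hs.card_pos
    rw [card_cons]
    omega

lemma iSup {ι : Type*} [Fintype ι] {g : ι → Vec n → ℝ} (hg : ∀ i, IsSuppFnDiff U (g i)) :
    ∃ V : Submodule ℝ (Vec n), finrank ℝ V ≤ finrank ℝ U + (Fintype.card ι - 1) ∧
      IsSuppFnDiff V (fun x => ⨆ i, g i x) := by
  cases isEmpty_or_nonempty ι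
  · exact ⟨U, le_self_add, by simp only [Real.iSup_of_isEmpty]; exact zero⟩
  obtain ⟨V, -, hV, hgV⟩ := finset_sup' univ_nonempty fun i _ => hg i
  refine ⟨V, hV, ?_⟩
  convert hgV using 1
  funext x
  rw [Finset.sup'_apply, sup'_univ_eq_ciSup]

theorem mem_span_maxGen (hf : IsSuppFnDiff U f) {m : ℕ} (hU : finrank ℝ U < m) :
    f ∈ Submodule.span ℝ (maxGen n m) := by
  obtain ⟨A, B, c, d, hA, hB, hAU, hBU, rfl⟩ := hf
  exact Submodule.sub_mem _ (suppFn_mem_span_maxGen hU A hA hAU)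
    (suppFn_mem_span_maxGen hU B hB hBU)

end IsSuppFnDiff

end SuppFnDiff

lemma mval_zero (d r : ℕ → ℕ) : mval d r 0 = 0 := by
  simp [mval]

lemma mval_succ (d r : ℕ → ℕ) (k : ℕ) :
    mval d r (k + 1) = d (k + 1) * mval d r k + (r (k + 1) - 1) := by
  simp only [mval]
  rw [sum_Icc_succ_top (by omega), Icc_eq_empty (a := k + 1 + 1) (b := k + 1) (by omega),
    prod_empty, mul_one, mul_sum]
  congr 1
  refine sum_congr rfl fun j hj => ?_
  rw [prod_Icc_succ_top (by simp at hj; omega)]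
  ring

theorem exists_isSuppFnDiff_of_mem_Nhat {n : ℕ} {d r : ℕ → ℕ} {ℓ : ℕ} {f : Vec n → ℝ}
    (hf : f ∈ Nhat n d r ℓ) :
    ∃ U : Submodule ℝ (Vec n), finrank ℝ U ≤ mval d r ℓ ∧ IsSuppFnDiff U f := by
  induction ℓ generalizing f with
  | zero =>
    obtain ⟨v, rfl⟩ := hf
    exact ⟨⊥, by simp, IsSuppFnDiff.dotProduct v⟩
  | succ k ih =>
    obtain ⟨α, g, hg, rfl⟩ := hf
    choose U hU hgU using fun j => ih (hg j)
    obtain ⟨V, hV, hfV⟩ := IsSuppFnDiff.iSup fun i =>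
      IsSuppFnDiff.sum univ (fun j _ => hgU j) (α i)
    refine ⟨V, ?_, by simpa only [Finset.sum_apply, Pi.smul_apply, smul_eq_mul] using hfV⟩
    have := Submodule.finrank_finset_sup_le univ U fun j _ => hU j
    simp only [card_univ, Fintype.card_fin] at this hV
    rw [mval_succ]
    omega

theorem Nfull_subset_MAXn (n : ℕ) (d r : ℕ → ℕ) (ℓ : ℕ) :
    Nfull n d r ℓ ⊆ MAXn n (mval d r ℓ + 1) := by
  rintro _ ⟨p, c, g, hg, rfl⟩
  refine mem_MAXn_of_mem_span_maxGen ?_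
  have hg' : ∀ i, g i ∈ Submodule.span ℝ (maxGen n (mval d r ℓ + 1)) := fun i => by
    obtain ⟨U, hU, hgU⟩ := exists_isSuppFnDiff_of_mem_Nhat (hg i)
    exact hgU.mem_span_maxGen (Nat.lt_succ_of_le hU)
  have hsum : (fun x => ∑ i, c i * g i x) = ∑ i, c i • g i := by
    ext x; simp [Finset.sum_apply]
  rw [hsum]
  exact Submodule.sum_mem _ fun i _ => Submodule.smul_mem _ (c i) (hg' i)

section TwoTwo

variable {n : ℕ}

lemma mval_two_two (ℓ : ℕ) :
    mval (fun k => if k = 1 then n else 2) (fun _ => 2) ℓ + 1 = 2 ^ ℓ := by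
  induction ℓ with
  | zero => simp [mval_zero]
  | succ k ih =>
    rw [mval_succ]
    rcases Nat.eq_zero_or_pos k with rfl | hk
    · simp [mval_zero]
    · rw [if_neg (by omega), pow_succ]
      omega

lemma sup_mem_Nhat_two_succ {k : ℕ} {g h : Vec n → ℝ}
    (hg : g ∈ Nhat n (fun k => if k = 1 then n else 2) (fun _ => 2) k)
    (hh : h ∈ Nhat n (fun k => if k = 1 then n else 2) (fun _ => 2) k) :
    g ⊔ h ∈ Nhat n (fun k => if k = 1 then n else 2) (fun _ => 2) (k + 1) := by
  rcases k with _ | k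
  · obtain ⟨a, rfl⟩ := hg
    obtain ⟨b, rfl⟩ := hh
    refine ⟨![a, b], fun j x => x j, fun j => ⟨Pi.single j 1, ?_⟩, ?_⟩
    · funext x
      simp [Pi.single_apply]
    · funext x
      rw [Pi.sup_apply, ← iSup_fin_two_eq_max]
      congr 1
      funext i
      fin_cases i <;> rfl
  · refine ⟨![![1, 0], ![0, 1]], ![g, h], fun j => ?_, ?_⟩
    · fin_cases j
      exacts [hg, hh]
    · funext x
      show g x ⊔ h x = ⨆ i : Fin 2, ∑ j : Fin 2, ![![(1 : ℝ), 0], ![0, 1]] i j * ![g, h] j x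
      rw [← iSup_fin_two_eq_max]
      congr 1
      funext i
      fin_cases i <;> simp [Fin.sum_univ_two]

theorem suppFn_mem_Nhat_two {ℓ : ℕ} {A : Finset (Vec n)} (hA : A.Nonempty)
    (hcard : A.card ≤ 2 ^ ℓ) :
    suppFn ↑A ∈ Nhat n (fun k => if k = 1 then n else 2) (fun _ => 2) ℓ := by
  classical
  induction ℓ generalizing A with
  | zero =>
    obtain ⟨a, rfl⟩ := card_eq_one.mp (le_antisymm (by simpa using hcard) hA.card_pos)
    exact ⟨a, funext fun x => by rw [coe_singleton, suppFn_singleton]; rfl⟩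
  | succ k ih =>
    obtain ⟨B, C, hB, hC, hBk, hCk, rfl⟩ :=
      exists_union_eq_of_card_le_two_mul hA (by rwa [← pow_succ'])
    have hBC : suppFn (↑(B ∪ C) : Set (Vec n)) = suppFn ↑B ⊔ suppFn ↑C := funext fun x => by
      rw [coe_union, suppFn_union B.finite_toSet (coe_nonempty.mpr hB) C.finite_toSet
        (coe_nonempty.mpr hC), Pi.sup_apply]
    rw [hBC]
    exact sup_mem_Nhat_two_succ (ih hB hBk) (ih hC hCk)

end TwoTwo

theorem Nfull_two_two_eq_MAXn_general {n : ℕ} (ℓ : ℕ) :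
    Nfull n (fun k => if k = 1 then n else 2) (fun _ => 2) ℓ = MAXn n (2 ^ ℓ) := by
  refine subset_antisymm ?_ ?_
  · have := Nfull_subset_MAXn n (fun k => if k = 1 then n else 2) (fun _ => 2) ℓ
    rwa [mval_two_two] at this
  · rintro _ ⟨p, β, a, rfl⟩
    refine ⟨p, β, fun i => suppFn (Set.range (a i)), fun i => ?_, funext fun x => ?_⟩
    · show suppFn (Set.range (a i)) ∈ _
      rw [← Set.image_univ, ← coe_univ, ← coe_image]
      exact suppFn_mem_Nhat_two (univ_nonempty.image _) (card_image_le.trans (by simp))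
    · simp only [suppFn_range]
      rfl

/-- `N_n(ℓ,𝟐,𝟐) = MAX_n(2^ℓ)`. -/
theorem Nfull_two_two_eq_MAXn {n : ℕ} (hn : 1 ≤ n) (ℓ : ℕ) :
    Nfull n (fun k => if k = 1 then n else 2) (fun _ => 2) ℓ = MAXn n (2 ^ ℓ) :=
  Nfull_two_two_eq_MAXn_general ℓ
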